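/- Let $l_1, \ldots, l_n$ be a basis of the dual root system $R^\vee$ in $L^*$ and let $-l_{n+1}$ be the highest root of $R^\vee$ with respect to this basis. For $i = 1, \ldots, n+1$ define $Z_i := \bigcap_{j \neq i} \{x \in L \mid l_j(x) \geq 0\}$. Then for every choice of points $x_i \in Z_i$ ($i = 1, \ldots, n+1$), the origin lies in $\operatorname{conv}(\{x_1, \ldots, x_{n+1}\})$. -/

import Mathlib

/-!
Since `-l (n+1)` is the highest coroot, its coordinates in the base `l 1, …, l n` are all
positive, so `l 1, …, l (n+1)` satisfy a linear relation with positive coefficients. Subtracting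
a suitable multiple of that relation writes any `ψ ∈ L*` as a nonnegative combination of the
`l j` with `j ≠ i` for some `i`, and then `ψ (x i) ≥ 0`. By Farkas' lemma, a finite family on
which no functional is everywhere negative has `0` in its convex hull.
-/

/-- An irreducible reduced (crystallographic) root system spanning a rational
vector space `L`, encoded via its finite set of roots and the coroot pairing. -/
structure RootSystemData (L : Type*) [AddCommGroup L] [Module ℚ L] where
  roots : Finset L
  coroot : L → (L →ₗ[ℚ] ℚ)
  ne_zero : ∀ α ∈ roots, α ≠ 0
  span_eq_top : Submodule.span ℚ (roots : Set L) = ⊤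
  coroot_self : ∀ α ∈ roots, coroot α α = 2
  coroot_int : ∀ α ∈ roots, ∀ β ∈ roots, ∃ n : ℤ, coroot α β = (n : ℚ)
  reflect_mem : ∀ α ∈ roots, ∀ β ∈ roots, β - coroot α β • α ∈ roots
  reduced : ∀ α ∈ roots, ∀ c : ℚ, c • α ∈ roots → c = 1 ∨ c = -1
  irreducible : ∀ S : Finset L, S ⊆ roots → S.Nonempty →
    (∃ β ∈ roots, β ∉ S) → ∃ α ∈ S, ∃ β ∈ roots, β ∉ S ∧ coroot α β ≠ 0


/-- The dual root system `R^∨ ⊂ L*`: the set of coroots. -/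
def dualRoots {L : Type*} [AddCommGroup L] [Module ℚ L] (R : RootSystemData L) :
    Set (Module.Dual ℚ L) :=
  R.coroot '' (R.roots : Set L)

/-- An indexed family is a base of the dual root system `R^∨`. -/
def IsDualBase {L : Type*} [AddCommGroup L] [Module ℚ L] (R : RootSystemData L)
    {n : ℕ} (b : Fin n → Module.Dual ℚ L) : Prop :=
  (∀ i, b i ∈ dualRoots R) ∧ LinearIndependent ℚ b ∧
    ∀ φ ∈ dualRoots R,
      (∃ c : Fin n → ℕ, φ = ∑ i, (c i : ℚ) • b i) ∨
      (∃ c : Fin n → ℕ, φ = -(∑ i, (c i : ℚ) • b i))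

/-- `θ` is the highest root of `R^∨` with respect to the base `b`: it is a
dual root and dominates every dual root in the usual partial order. -/
def IsHighestDualRoot {L : Type*} [AddCommGroup L] [Module ℚ L]
    (R : RootSystemData L) {n : ℕ} (b : Fin n → Module.Dual ℚ L)
    (θ : Module.Dual ℚ L) : Prop :=
  θ ∈ dualRoots R ∧
    ∀ φ ∈ dualRoots R, ∃ c : Fin n → ℚ, (∀ i, 0 ≤ c i) ∧ θ - φ = ∑ i, c i • b i

section Farkas

variable {𝕜 E : Type*} [Field 𝕜] [LinearOrder 𝕜] [IsStrictOrderedRing 𝕜]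
  [AddCommGroup E] [Module 𝕜 E]

-- Farkas' lemma, proved by Fourier–Motzkin elimination of `v 0`.
theorem exists_dual_nonneg_and_neg_of_not_exists_nonneg_sum_eq {m : ℕ} (v : Fin m → E) (z : E)
    (hz : ¬∃ c : Fin m → 𝕜, (∀ i, 0 ≤ c i) ∧ ∑ i, c i • v i = z) :
    ∃ ψ : Module.Dual 𝕜 E, (∀ i, 0 ≤ ψ (v i)) ∧ ψ z < 0 := by
  induction m generalizing z with
  | zero =>
    have hz0 : z ≠ 0 := fun h => hz ⟨0, fun _ => le_rfl, by simp [h]⟩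
    obtain ⟨f, hf⟩ := Module.Projective.exists_dual_eq_one 𝕜 hz0
    exact ⟨-f, finZeroElim, by simp [hf]⟩
  | succ m ih =>
    obtain ⟨ψ, hψ, hψz⟩ := ih (Fin.tail v) z fun ⟨c, hc, hsum⟩ =>
      hz ⟨Fin.cons 0 c, Fin.cases le_rfl hc, by simpa [Fin.sum_univ_succ, Fin.tail] using hsum⟩
    rcases le_or_gt 0 (ψ (v 0)) with hv0 | hv0
    · exact ⟨ψ, Fin.cases hv0 hψ, hψz⟩
    -- `P` projects onto `ker ψ` along `v 0`.
    set P : E →ₗ[𝕜] E := LinearMap.id - ((ψ (v 0))⁻¹ • ψ).smulRight (v 0) with hP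
    have hPv0 : P (v 0) = 0 := by simp [hP, hv0.ne]
    have hker : ∀ y, P y = 0 → y = (ψ y / ψ (v 0)) • v 0 := by
      intro y hy
      simpa [hP, sub_eq_zero, div_eq_inv_mul] using hy
    obtain ⟨φ, hφ, hφz⟩ := ih (P ∘ Fin.tail v) (P z) fun ⟨c, hc, hsum⟩ => by
      set r := z - ∑ i, c i • Fin.tail v i
      have hr : r = (ψ r / ψ (v 0)) • v 0 := hker r (by simp [r, ← hsum])
      have hψr : ψ r < 0 := by
        have : 0 ≤ ∑ i, c i * ψ (Fin.tail v i) :=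
          Finset.sum_nonneg fun i _ => mul_nonneg (hc i) (hψ i)
        simp only [r, map_sub, map_sum, map_smul, smul_eq_mul]
        linarith
      refine hz ⟨Fin.cons (ψ r / ψ (v 0)) c, Fin.cases (div_nonneg_of_nonpos hψr.le hv0.le) hc, ?_⟩
      rw [Fin.sum_univ_succ]
      simp only [Fin.cons_zero, Fin.cons_succ]
      rw [← hr]
      simp [r, Fin.tail]
    exact ⟨φ ∘ₗ P, Fin.cases (by simp [hPv0]) hφ, hφz⟩

theorem zero_mem_convexHull_of_forall_dual_exists_nonneg {m : ℕ} (x : Fin m → E)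
    (H : ∀ ψ : Module.Dual 𝕜 E, ∃ i, 0 ≤ ψ (x i)) :
    (0 : E) ∈ convexHull 𝕜 (Set.range x) := by
  obtain ⟨c, hc, hsum⟩ : ∃ c : Fin m → 𝕜, (∀ i, 0 ≤ c i) ∧
      ∑ i, c i • ((x i, 1) : E × 𝕜) = (0, 1) := by
    by_contra hcone
    obtain ⟨Ψ, hΨ, hΨz⟩ := exists_dual_nonneg_and_neg_of_not_exists_nonneg_sum_eq _ _ hcone
    obtain ⟨i, hi⟩ := H (-(Ψ ∘ₗ LinearMap.inl 𝕜 E 𝕜))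
    have hsplit : Ψ (x i, 1) = Ψ (x i, 0) + Ψ (0, 1) := by rw [← map_add]; simp
    have := hΨ i
    simp only [LinearMap.neg_apply, LinearMap.comp_apply, LinearMap.inl_apply] at hi
    linarith
  refine mem_convexHull_of_exists_fintype c x hc ?_ (fun i => Set.mem_range_self i) ?_
  · simpa [Prod.snd_sum] using congrArg Prod.snd hsum
  · simpa [Prod.fst_sum] using congrArg Prod.fst hsum

end Farkas

section PositiveRelation

variable {𝕜 V : Type*} [Field 𝕜] [LinearOrder 𝕜] [IsStrictOrderedRing 𝕜]
  [AddCommGroup V] [Module 𝕜 V]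

theorem exists_nonneg_sum_omitting_of_pos_relation {ι : Type*} [Fintype ι] [Nonempty ι]
    {l : ι → V} (hl : Submodule.span 𝕜 (Set.range l) = ⊤) {c : ι → 𝕜} (hc : ∀ i, 0 < c i)
    (hrel : ∑ i, c i • l i = 0) (ψ : V) :
    ∃ k, ∃ a : ι → 𝕜, (∀ j, 0 ≤ a j) ∧ a k = 0 ∧ ∑ j, a j • l j = ψ := by
  obtain ⟨d, rfl⟩ : ∃ d : ι → 𝕜, ∑ i, d i • l i = ψ :=
    (Submodule.mem_span_range_iff_exists_fun 𝕜).mp (hl ▸ Submodule.mem_top)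
  -- Subtract the largest multiple of the relation that keeps all coefficients nonnegative.
  obtain ⟨k, -, hk⟩ := Finset.univ.exists_min_image (fun i => d i / c i) Finset.univ_nonempty
  refine ⟨k, fun j => d j - d k / c k * c j, fun j => ?_, ?_, ?_⟩
  · exact sub_nonneg.mpr ((le_div_iff₀ (hc j)).mp (hk j (Finset.mem_univ j)))
  · simp [div_mul_cancel₀ _ (hc k).ne']
  · simp [sub_smul, Finset.sum_sub_distrib, mul_smul, ← Finset.smul_sum, hrel]

theorem Module.Basis.repr_pos_of_forall_sub_nonneg_sum {ι : Type*} [Fintype ι]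
    (B : Module.Basis ι 𝕜 V) {θ : V}
    (h : ∀ k, ∃ c : ι → 𝕜, (∀ i, 0 ≤ c i) ∧ θ - B k = ∑ i, c i • B i) (k : ι) :
    0 < B.repr θ k := by
  obtain ⟨c, hc, hθ⟩ := h k
  have hθk : B.repr θ k = c k + 1 := by
    rw [sub_eq_iff_eq_add.mp hθ, map_add, Finsupp.add_apply, B.repr_sum_self, B.repr_self]
    simp
  linarith [hc k]

end PositiveRelation

/-- Let `l 1, …, l n` be a base of the dual root system `R^∨` and let
`-l (n+1)` be the corresponding highest root of `R^∨`.  If, for each `i`, the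
point `x i` lies in `Z i = ⋂_{j ≠ i} {x | l j x ≥ 0}`, then `0` lies in the
convex hull of `x 1, …, x (n+1)`. -/
theorem zero_mem_convexHull_of_mem_sectors {L : Type*} [AddCommGroup L]
    [Module ℚ L] (R : RootSystemData L) {n : ℕ} (hn : Module.finrank ℚ L = n)
    (l : Fin (n + 1) → Module.Dual ℚ L)
    (hbase : IsDualBase R (fun i : Fin n => l i.castSucc))
    (hhigh : IsHighestDualRoot R (fun i : Fin n => l i.castSucc) (-(l (Fin.last n))))
    (x : Fin (n + 1) → L) (hx : ∀ i j, j ≠ i → 0 ≤ l j (x i)) :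
    (0 : L) ∈ convexHull ℚ (Set.range x) := by
  have : Module.Finite ℚ L := ⟨R.span_eq_top ▸ Submodule.fg_span R.roots.finite_toSet⟩
  let B := basisOfLinearIndependentOfCardEqFinrank' _ hbase.2.1
    (by simp [Subspace.dual_finrank_eq, hn])
  have hB : ⇑B = fun i : Fin n => l i.castSucc := coe_basisOfLinearIndependentOfCardEqFinrank' ..
  have hθ : ∀ k, 0 < B.repr (-l (Fin.last n)) k :=
    B.repr_pos_of_forall_sub_nonneg_sum fun k => hB ▸ hhigh.2 _ (hbase.1 k)
  have hspan : Submodule.span ℚ (Set.range l) = ⊤ :=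
    top_unique <| B.span_eq ▸ Submodule.span_mono (hB ▸ Set.range_comp_subset_range _ _)
  set c : Fin (n + 1) → ℚ := Fin.snoc (B.repr (-l (Fin.last n))) 1
  have hc : ∀ j, 0 < c j := Fin.lastCases (by simp [c]) (by simpa [c] using hθ)
  have hrel : ∑ j, c j • l j = 0 := by
    have hsum := B.sum_repr (-l (Fin.last n))
    rw [hB] at hsum
    simp only [c, Fin.sum_univ_castSucc, Fin.snoc_castSucc, Fin.snoc_last, one_smul, hsum,
      neg_add_cancel]
  refine zero_mem_convexHull_of_forall_dual_exists_nonneg x fun ψ => ?_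
  obtain ⟨i, a, ha, hai, rfl⟩ := exists_nonneg_sum_omitting_of_pos_relation hspan hc hrel ψ
  refine ⟨i, ?_⟩
  simp only [LinearMap.sum_apply, LinearMap.smul_apply, smul_eq_mul]
  refine Finset.sum_nonneg fun j _ => ?_
  rcases eq_or_ne j i with rfl | hji
  · simp [hai]
  · exact mul_nonneg (ha j) (hx i j hji)
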